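/- arXiv:1310.7954 — 2 statements merged into one kernel-verified Lean document; each statement's English description precedes it below -/
import Mathlib

section
/- Let n ≥ 1 be an integer, α ∈ (0,1], and let θ ∈ [0, π/2) satisfy tan θ = √(1/α² − 1)·(2^{1/n} − 1). Define c : (Fin n → Fin 2) → ℂ by c(r) = (−1)^{∧r + ⊕r}, where ∧r = 1 if all bits of r equal 1 and ∧r = 0 otherwise, and ⊕r is the parity (XOR) of the bits of r. Let X be the matrix indexed by (Fin n → Fin 2) × (Fin n → Fin 2) with entries X((y,x),(y',x')) = (if y = x then c(x) else 0) · conj(if y' = x' then c(x') else 0), i.e., the Choi matrix of the diagonal unitary channel Φ₁ with diagonal entries c(r). Then X is positive semidefinite, its partial trace over the first factor equals the identity (for all x, x': Σ_y X((y,x),(y,x')) = if x = x' then 1 else 0), and trace(Q₀^{⊗n} · X) = 0; i.e., Φ₁ is a perfect hedging strategy for winning 1 out of n repetitions at θ = θ₁. -/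
open scoped BigOperators ComplexOrder

/-- The Hamming weight (number of ones) of a bit string `r : Fin n → Fin 2`. -/
def bitWeight {n : ℕ} (r : Fin n → Fin 2) : ℕ := ∑ i, (r i : ℕ)

/-- The losing measurement vector `ψ₀¹ = α sin θ |00⟩ − √(1−α²) cos θ |11⟩`. -/
noncomputable def psi1 (α θ : ℝ) : Fin 2 × Fin 2 → ℂ := fun p =>
  if p = (0, 0) then ((α * Real.sin θ : ℝ) : ℂ)
  else if p = (1, 1) then (-(Real.sqrt (1 - α ^ 2) * Real.cos θ) : ℝ)
  else 0

/-- The losing measurement vector `ψ₀² = α sin θ |01⟩ + √(1−α²) cos θ |10⟩`. -/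
noncomputable def psi2 (α θ : ℝ) : Fin 2 × Fin 2 → ℂ := fun p =>
  if p = (0, 1) then ((α * Real.sin θ : ℝ) : ℂ)
  else if p = (1, 0) then ((Real.sqrt (1 - α ^ 2) * Real.cos θ : ℝ) : ℂ)
  else 0

/-- The losing measurement vector `ψ₀³ = α cos θ |01⟩ − √(1−α²) sin θ |10⟩`. -/
noncomputable def psi3 (α θ : ℝ) : Fin 2 × Fin 2 → ℂ := fun p =>
  if p = (0, 1) then ((α * Real.cos θ : ℝ) : ℂ)
  else if p = (1, 0) then (-(Real.sqrt (1 - α ^ 2) * Real.sin θ) : ℝ)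
  else 0

/-- Alice's effective losing operator `Q₀ = ψ₀¹(ψ₀¹)* + ψ₀²(ψ₀²)* + ψ₀³(ψ₀³)*` for one
repetition of the game. -/
noncomputable def Q0 (α θ : ℝ) : Matrix (Fin 2 × Fin 2) (Fin 2 × Fin 2) ℂ :=
  Matrix.of fun i j =>
    psi1 α θ i * (starRingEnd ℂ) (psi1 α θ j) +
    psi2 α θ i * (starRingEnd ℂ) (psi2 α θ j) +
    psi3 α θ i * (starRingEnd ℂ) (psi3 α θ j)

/-- The `n`-fold Kronecker power `Q₀^{⊗n}`, indexed by `(Fin n → Fin 2) × (Fin n → Fin 2)`. -/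
noncomputable def Q0pow (n : ℕ) (α θ : ℝ) :
    Matrix ((Fin n → Fin 2) × (Fin n → Fin 2)) ((Fin n → Fin 2) × (Fin n → Fin 2)) ℂ :=
  Matrix.of fun p q => ∏ i, Q0 α θ (p.1 i, p.2 i) (q.1 i, q.2 i)

/-- The diagonal entries `c(r) = (−1)^{∧r + ⊕r}` of the strategy `Φ₁`, where `∧r` is the AND
of the bits of `r` and `⊕r` their XOR (parity). -/
def phi1diag {n : ℕ} (r : Fin n → Fin 2) : ℂ :=
  (-1 : ℂ) ^ ((if ∀ i, r i = 1 then 1 else 0) + bitWeight r)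

/-- The Choi matrix of the diagonal unitary channel with diagonal entries `c`. -/
noncomputable def choiDiag {n : ℕ} (c : (Fin n → Fin 2) → ℂ) :
    Matrix ((Fin n → Fin 2) × (Fin n → Fin 2)) ((Fin n → Fin 2) × (Fin n → Fin 2)) ℂ :=
  Matrix.of fun p q =>
    (if p.1 = p.2 then c p.2 else 0) * (starRingEnd ℂ) (if q.1 = q.2 then c q.2 else 0)

/-!
The Choi matrix of a diagonal unitary with entries `c` is the rank-one projector onto
`v = ∑ₓ c(x) |x⟩|x⟩`, so `trace (Q₀^{⊗n} X) = ⟨v, Q₀^{⊗n} v⟩`. On the vectors `|a⟩|a⟩` only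
`ψ₀¹` is nonzero, hence this is `|∑ₓ c(x) ∏ᵢ ψ₀¹(xᵢ, xᵢ)|²`. The parity factor of `c` turns the
sum into the product `(s + t)ⁿ` with `s = α sin θ`, `t = √(1 - α²) cos θ`, and the AND factor
flips the sign of the all-ones term, leaving `(s + t)ⁿ - 2 tⁿ`. The choice of `θ` is exactly
`s + t = 2^{1/n} t`.
-/

open Matrix ComplexConjugate

section ChoiDiag

variable {n : ℕ}

def choiVec (c : (Fin n → Fin 2) → ℂ) : (Fin n → Fin 2) × (Fin n → Fin 2) → ℂ :=
  fun p => if p.1 = p.2 then c p.2 else 0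

lemma choiDiag_eq_vecMulVec (c : (Fin n → Fin 2) → ℂ) :
    choiDiag c = vecMulVec (choiVec c) (star (choiVec c)) := by
  ext p q
  simp [choiDiag, choiVec, vecMulVec_apply]

lemma posSemidef_choiDiag (c : (Fin n → Fin 2) → ℂ) : (choiDiag c).PosSemidef := by
  rw [choiDiag_eq_vecMulVec]
  exact posSemidef_vecMulVec_self_star _

lemma sum_choiDiag_apply (c : (Fin n → Fin 2) → ℂ) (x x' : Fin n → Fin 2) :
    ∑ y, choiDiag c (y, x) (y, x') = if x = x' then c x * conj (c x) else 0 := by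
  split_ifs with h
  · subst h; simp [choiDiag]
  · simp [choiDiag, h]

lemma trace_mul_choiDiag (M : Matrix ((Fin n → Fin 2) × (Fin n → Fin 2))
    ((Fin n → Fin 2) × (Fin n → Fin 2)) ℂ) (c : (Fin n → Fin 2) → ℂ) :
    trace (M * choiDiag c) = ∑ x, ∑ x', conj (c x) * M (x, x) (x', x') * c x' := by
  rw [choiDiag_eq_vecMulVec, mul_vecMulVec, trace_vecMulVec, dotProduct_comm]
  simp [mulVec, dotProduct, Fintype.sum_prod_type, choiVec, Finset.mul_sum, mul_assoc,
    apply_ite conj, ite_mul]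

lemma trace_mul_choiDiag_eq_normSq (M : Matrix ((Fin n → Fin 2) × (Fin n → Fin 2))
    ((Fin n → Fin 2) × (Fin n → Fin 2)) ℂ) (u c : (Fin n → Fin 2) → ℂ)
    (hM : ∀ x x', M (x, x) (x', x') = u x * conj (u x')) :
    trace (M * choiDiag c) = Complex.normSq (∑ x, u x * conj (c x)) := by
  rw [← Complex.mul_conj, map_sum, Finset.sum_mul_sum, trace_mul_choiDiag]
  simp only [hM, map_mul, Complex.conj_conj]
  exact Finset.sum_congr rfl fun x _ => Finset.sum_congr rfl fun x' _ => by ring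

lemma phi1diag_eq_prod_mul_ite (x : Fin n → Fin 2) :
    phi1diag x = (∏ i, (-1 : ℂ) ^ (x i : ℕ)) * if x = (fun _ => 1) then -1 else 1 := by
  simp only [phi1diag, bitWeight, ← funext_iff, Finset.prod_pow_eq_pow_sum, pow_add]
  split_ifs <;> ring

lemma conj_phi1diag (x : Fin n → Fin 2) : conj (phi1diag x) = phi1diag x := by
  simp [phi1diag]

lemma phi1diag_mul_conj (x : Fin n → Fin 2) : phi1diag x * conj (phi1diag x) = 1 := by
  rw [conj_phi1diag, ← sq, phi1diag, ← pow_mul, mul_comm, pow_mul, neg_one_sq, one_pow]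

lemma sum_prod_mul_phi1diag (f : Fin 2 → ℂ) :
    ∑ x : Fin n → Fin 2, (∏ i, f (x i)) * phi1diag x = (f 0 - f 1) ^ n - 2 * (-f 1) ^ n := by
  have hsplit : ∀ x : Fin n → Fin 2, (∏ i, f (x i)) * phi1diag x =
      ∏ i, f (x i) * (-1) ^ (x i : ℕ) - if x = (fun _ => 1) then 2 * (-f 1) ^ n else 0 := by
    intro x
    rw [phi1diag_eq_prod_mul_ite, ← mul_assoc, ← Finset.prod_mul_distrib]
    split_ifs with h
    · subst h
      simp only [Fin.val_one, pow_one, mul_neg, mul_one, Finset.prod_const, Finset.card_univ,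
        Fintype.card_fin]
      ring
    · ring
  rw [Finset.sum_congr rfl fun x _ => hsplit x, Finset.sum_sub_distrib, Finset.sum_ite_eq',
    if_pos (Finset.mem_univ _), ← Fintype.prod_sum (fun _ b => f b * (-1) ^ (b : ℕ)),
    Finset.prod_const, Finset.card_univ, Fintype.card_fin, Fin.sum_univ_two]
  simp [sub_eq_add_neg]

end ChoiDiag

lemma Q0_apply_diag (α θ : ℝ) (a b : Fin 2) :
    Q0 α θ (a, a) (b, b) = psi1 α θ (a, a) * conj (psi1 α θ (b, b)) := by
  have h2 : ∀ a : Fin 2, psi2 α θ (a, a) = 0 := by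
    intro a; fin_cases a <;> simp [psi2, Prod.ext_iff]
  have h3 : ∀ a : Fin 2, psi3 α θ (a, a) = 0 := by
    intro a; fin_cases a <;> simp [psi3, Prod.ext_iff]
  simp [Q0, h2, h3]

lemma Q0pow_apply_diag (n : ℕ) (α θ : ℝ) (x x' : Fin n → Fin 2) :
    Q0pow n α θ (x, x) (x', x') =
      (∏ i, psi1 α θ (x i, x i)) * conj (∏ i, psi1 α θ (x' i, x' i)) := by
  simp only [Q0pow, Matrix.of_apply, Q0_apply_diag, Finset.prod_mul_distrib, map_prod]

lemma mul_sqrt_one_div_sq_sub_one {α : ℝ} (hα : 0 < α) :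
    α * √(1 / α ^ 2 - 1) = √(1 - α ^ 2) := by
  rw [← Real.sqrt_sq hα.le, ← Real.sqrt_mul (sq_nonneg α), Real.sqrt_sq hα.le]
  congr 1
  field_simp

lemma add_pow_eq_two_mul_pow {n : ℕ} (hn : n ≠ 0) {s t : ℝ}
    (h : s = t * ((2 : ℝ) ^ ((1 : ℝ) / n) - 1)) : (s + t) ^ n = 2 * t ^ n := by
  rw [h, show t * ((2 : ℝ) ^ ((1 : ℝ) / n) - 1) + t = t * (2 : ℝ) ^ ((n : ℝ)⁻¹) by
    rw [one_div]; ring, mul_pow, Real.rpow_inv_natCast_pow zero_le_two hn, mul_comm]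

lemma sum_prod_psi1_mul_phi1diag (n : ℕ) (α θ : ℝ) :
    ∑ x : Fin n → Fin 2, (∏ i, psi1 α θ (x i, x i)) * phi1diag x =
      (((α * Real.sin θ + √(1 - α ^ 2) * Real.cos θ) ^ n
        - 2 * (√(1 - α ^ 2) * Real.cos θ) ^ n : ℝ) : ℂ) := by
  rw [sum_prod_mul_phi1diag fun b => psi1 α θ (b, b)]
  simp [psi1]

/-- Let `n ≥ 1`, `α ∈ (0,1]`, and `θ ∈ [0, π/2)` with
`tan θ = √(1/α² − 1)·(2^{1/n} − 1)`. Then the Choi matrix `X` of the diagonal unitary channel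
`Φ₁` with diagonal entries `c(r) = (−1)^{∧r + ⊕r}` is positive semidefinite, has partial trace
over the first factor equal to the identity, and satisfies `trace(Q₀^{⊗n}·X) = 0`: `Φ₁` is a
perfect hedging strategy for winning 1 out of `n` repetitions at `θ = θ₁`. -/
theorem stmt2 (n : ℕ) (hn : 1 ≤ n) (α : ℝ) (hα : α ∈ Set.Ioc (0 : ℝ) 1) (θ : ℝ)
    (hθ : θ ∈ Set.Ico (0 : ℝ) (Real.pi / 2))
    (ht : Real.tan θ = Real.sqrt (1 / α ^ 2 - 1) * ((2 : ℝ) ^ ((1 : ℝ) / n) - 1)) :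
    (choiDiag (phi1diag (n := n))).PosSemidef ∧
    (∀ x x' : Fin n → Fin 2,
      ∑ y : Fin n → Fin 2, choiDiag (phi1diag (n := n)) (y, x) (y, x')
        = if x = x' then 1 else 0) ∧
    Matrix.trace (Q0pow n α θ * choiDiag (phi1diag (n := n))) = 0 := by
  refine ⟨posSemidef_choiDiag _, fun x x' => ?_, ?_⟩
  · rw [sum_choiDiag_apply, phi1diag_mul_conj]
  have hcos : Real.cos θ ≠ 0 :=
    (Real.cos_pos_of_mem_Ioo ⟨by linarith [Real.pi_pos, hθ.1], hθ.2⟩).ne'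
  have hs : α * Real.sin θ =
      √(1 - α ^ 2) * Real.cos θ * ((2 : ℝ) ^ ((1 : ℝ) / n) - 1) := by
    rw [← Real.tan_mul_cos hcos, ht, ← mul_sqrt_one_div_sq_sub_one hα.1]; ring
  have hvanish := add_pow_eq_two_mul_pow (by omega) hs
  rw [trace_mul_choiDiag_eq_normSq _ _ _ (Q0pow_apply_diag n α θ)]
  simp only [conj_phi1diag, sum_prod_psi1_mul_phi1diag, hvanish, sub_self, Complex.ofReal_zero,
    map_zero]
end

section
/- Let d be a finite nonempty type, n ≥ 1 an integer, and let A, B be complex Hermitian matrices indexed by d with 0 ≤ A ≤ B and B·B = B (B an orthogonal projection). Let P be the matrix indexed by (Fin n → d) with entries P(r, c) = ∏ᵢ B(r i, c i) (the n-fold Kronecker power B^{⊗n}), and let R be the matrix with entries R(r, c) = ∏ᵢ (B − A)(r i, c i) (the n-fold Kronecker power (B − A)^{⊗n}). Then the spectral norm satisfies ‖P − R‖ = 1 − (1 − ‖A‖)^n. Equivalently, the optimal probability of winning at least one of n parallel repetitions in the verification model with abstention equals 1 − (1 − ‖A‖)^n, the value achieved by playing each repetition independently. -/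
/-!
Since `0 ≤ A ≤ B` with `B` a projection, `A = B A B ≤ ‖A‖ • B`, hence
`(1 - ‖A‖) • B ≤ B - A ≤ B`. Kronecker powers are monotone on nonnegative matrices, so for the
projection `P = B^{⊗n}` and `R = (B - A)^{⊗n}` we get `(1 - ‖A‖)ⁿ • P ≤ R ≤ P`, and therefore
`0 ≤ P - R ≤ (1 - (1 - ‖A‖)ⁿ) • P ≤ 1 - (1 - ‖A‖)ⁿ`. The bound is attained: an eigenvector `v`
of `A` for the eigenvalue `‖A‖` lies in the range of `B`, and `v^{⊗n}` is an eigenvector of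
`P - R` for the eigenvalue `1 - (1 - ‖A‖)ⁿ`.
-/

open scoped BigOperators ComplexOrder

/-- The ℓ²→ℓ² operator norm (spectral norm, largest singular value) of a square complex
matrix, via the associated continuous linear map on Euclidean space. -/
noncomputable def specNorm {m : Type*} [Fintype m] [DecidableEq m] (M : Matrix m m ℂ) : ℝ :=
  ‖Matrix.toEuclideanCLM (𝕜 := ℂ) M‖

/-- The `n`-fold Kronecker power of a square matrix `M`, as a matrix indexed by `Fin n → d`,
with entries `(r, c) ↦ ∏ᵢ M (r i) (c i)`. -/
def kronPow {d : Type*} [Fintype d] (n : ℕ) (M : Matrix d d ℂ) :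
    Matrix (Fin n → d) (Fin n → d) ℂ :=
  Matrix.of fun r c => ∏ i, M (r i) (c i)

open scoped Matrix

section CStarAlgebra

variable {A : Type*} [CStarAlgebra A] [PartialOrder A] [StarOrderedRing A]

lemma CStarAlgebra.norm_eq_of_mem_spectrum_of_le_algebraMap {a : A} {r : ℝ} (ha : 0 ≤ a)
    (hr : r ∈ spectrum ℝ a) (hle : a ≤ algebraMap ℝ A r) : ‖a‖ = r := by
  have : Nontrivial A :=
    (subsingleton_or_nontrivial A).resolve_left fun _ => by simp [spectrum.of_subsingleton] at hr
  exact le_antisymm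
    ((CStarAlgebra.norm_le_iff_le_algebraMap a (spectrum_nonneg_of_nonneg ha hr) ha).2 hle)
    ((Real.le_norm_self r).trans (spectrum.norm_le_norm_of_mem hr))

lemma IsStarProjection.le_norm_smul_of_nonneg_of_le {e x : A} (he : IsStarProjection e)
    (hx : 0 ≤ x) (hxe : x ≤ e) : x ≤ ‖x‖ • e := by
  have h := star_left_conjugate_le_conjugate
    (IsSelfAdjoint.of_nonneg hx).le_algebraMap_norm_self e
  rwa [he.isSelfAdjoint.star_eq, he.conjugate_of_nonneg_of_le hx hxe,
    Algebra.algebraMap_eq_smul_one, mul_smul_comm, mul_one, smul_mul_assoc,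
    he.isIdempotentElem.eq] at h

lemma IsStarProjection.sub_le_algebraMap_of_smul_le {p x : A} (hp : IsStarProjection p) {s : ℝ}
    (hs : s ≤ 1) (hx : s • p ≤ x) : p - x ≤ algebraMap ℝ A (1 - s) := calc
  p - x ≤ p - s • p := sub_le_sub_left hx p
  _ = (1 - s) • p := by rw [sub_smul, one_smul]
  _ ≤ (1 - s) • 1 := smul_le_smul_of_nonneg_left hp.le_one (sub_nonneg.2 hs)
  _ = algebraMap ℝ A (1 - s) := (Algebra.algebraMap_eq_smul_one _).symm

end CStarAlgebra

namespace Matrix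

section Spectrum

variable {n : Type*} [Fintype n] [DecidableEq n]

lemma mem_spectrum_iff_exists_mulVec_eq_smul {K : Type*} [Field K] {M : Matrix n n K} {μ : K} :
    μ ∈ spectrum K M ↔ ∃ v ≠ 0, M *ᵥ v = μ • v := by
  rw [← spectrum_toLin', ← Module.End.hasEigenvalue_iff_mem_spectrum]
  constructor
  · intro h
    obtain ⟨v, hv, hv0⟩ := h.exists_hasEigenvector
    exact ⟨v, hv0, by simpa using Module.End.mem_eigenspace_iff.1 hv⟩
  · rintro ⟨v, hv0, hMv⟩
    exact Module.End.hasEigenvalue_of_hasEigenvector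
      ⟨Module.End.mem_eigenspace_iff.2 (by simpa using hMv), hv0⟩

lemma real_mem_spectrum_iff_exists_mulVec_eq_smul {𝕜 : Type*} [RCLike 𝕜] {M : Matrix n n 𝕜}
    {r : ℝ} : r ∈ spectrum ℝ M ↔ ∃ v ≠ 0, M *ᵥ v = (r : 𝕜) • v := by
  rw [← spectrum.algebraMap_mem_iff 𝕜, mem_spectrum_iff_exists_mulVec_eq_smul]

open scoped Matrix.Norms.L2Operator in
lemma _root_.specNorm_eq_norm (M : Matrix n n ℂ) : specNorm M = ‖M‖ :=
  rfl

open scoped MatrixOrder Matrix.Norms.L2Operator in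
lemma exists_mulVec_eq_norm_smul [Nonempty n] {M : Matrix n n ℂ} (hM : 0 ≤ M) :
    ∃ v ≠ 0, M *ᵥ v = (‖M‖ : ℂ) • v :=
  real_mem_spectrum_iff_exists_mulVec_eq_smul.1 (CStarAlgebra.norm_mem_spectrum_of_nonneg hM)

open scoped MatrixOrder Matrix.Norms.L2Operator in
lemma _root_.IsStarProjection.exists_mulVec_eq_norm_smul_of_nonneg_of_le [Nonempty n]
    {A B : Matrix n n ℂ} (hB : IsStarProjection B) (hA : 0 ≤ A) (hAB : A ≤ B) (ha : ‖A‖ ≠ 0) :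
    ∃ v ≠ 0, A *ᵥ v = (‖A‖ : ℂ) • v ∧ B *ᵥ v = v := by
  obtain ⟨v, hv0, hAv⟩ := exists_mulVec_eq_norm_smul hA
  refine ⟨v, hv0, hAv, smul_right_injective _ (by exact_mod_cast ha : (‖A‖ : ℂ) ≠ 0) ?_⟩
  calc (‖A‖ : ℂ) • B *ᵥ v = B *ᵥ (A *ᵥ v) := by rw [hAv, mulVec_smul]
    _ = (‖A‖ : ℂ) • v := by
      rw [mulVec_mulVec, (hB.mul_right_and_mul_left_of_nonneg_of_le hA hAB).2, hAv]

end Spectrum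

section piKronecker

variable {ι d R : Type*} [Fintype ι]

def piKronecker [CommMonoid R] (M : ι → Matrix d d R) : Matrix (ι → d) (ι → d) R :=
  of fun r c => ∏ i, M i (r i) (c i)

lemma conjTranspose_piKronecker [CommSemiring R] [StarRing R] (M : ι → Matrix d d R) :
    (piKronecker M)ᴴ = piKronecker fun i => (M i)ᴴ := by
  ext r c
  simp [piKronecker, conjTranspose_apply]

variable [DecidableEq ι]

lemma piKronecker_update_apply [CommMonoid R] (M : ι → Matrix d d R) (j : ι)
    (X : Matrix d d R) (r c : ι → d) :
    piKronecker (Function.update M j X) r c = X (r j) (c j) * ∏ i ∈ {j}ᶜ, M i (r i) (c i) := by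
  rw [piKronecker, of_apply, Fintype.prod_eq_mul_prod_compl j, Function.update_self]
  congr 1
  refine Finset.prod_congr rfl fun i hi => ?_
  rw [Function.update_of_ne (by simpa using hi)]

lemma piKronecker_update_sub [CommRing R] (M : ι → Matrix d d R) (j : ι) (X Y : Matrix d d R) :
    piKronecker (Function.update M j (X - Y)) =
      piKronecker (Function.update M j X) - piKronecker (Function.update M j Y) := by
  ext r c
  simp only [sub_apply, piKronecker_update_apply, sub_mul]

variable [Fintype d]

lemma piKronecker_mul [CommSemiring R] (M N : ι → Matrix d d R) :
    piKronecker M * piKronecker N = piKronecker fun i => M i * N i := by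
  ext r c
  simp only [piKronecker, mul_apply, of_apply, Finset.prod_univ_sum, Fintype.piFinset_univ,
    Finset.prod_mul_distrib]

lemma piKronecker_mulVec [CommSemiring R] (M : ι → Matrix d d R) (v : ι → d → R) :
    piKronecker M *ᵥ (fun r => ∏ i, v i (r i)) = fun r => ∏ i, (M i *ᵥ v i) (r i) := by
  ext r
  simp only [piKronecker, mulVec, dotProduct, of_apply, Finset.prod_univ_sum,
    Fintype.piFinset_univ, Finset.prod_mul_distrib]

lemma isStarProjection_piKronecker [CommSemiring R] [StarRing R] {M : ι → Matrix d d R}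
    (h : ∀ i, IsStarProjection (M i)) : IsStarProjection (piKronecker M) where
  isIdempotentElem := by
    rw [IsIdempotentElem, piKronecker_mul]
    exact congrArg piKronecker (funext fun i => (h i).isIdempotentElem.eq)
  isSelfAdjoint := by
    rw [IsSelfAdjoint, star_eq_conjTranspose, conjTranspose_piKronecker]
    exact congrArg piKronecker (funext fun i => (h i).isSelfAdjoint.star_eq)

open scoped MatrixOrder Matrix.Norms.L2Operator

variable [DecidableEq d]

lemma piKronecker_nonneg {M : ι → Matrix d d ℂ} (h : ∀ i, 0 ≤ M i) : 0 ≤ piKronecker M := by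
  choose N hN using fun i => CStarAlgebra.nonneg_iff_eq_star_mul_self.1 (h i)
  have : piKronecker M = star (piKronecker N) * piKronecker N := by
    rw [star_eq_conjTranspose, conjTranspose_piKronecker, piKronecker_mul]
    exact congrArg piKronecker (funext hN)
  exact this ▸ star_mul_self_nonneg _

/-- Replacing the factors `M i` by the larger `N i` one index at a time, each step adds the
Kronecker product of nonnegative factors with `N j - M j` in slot `j`. -/
lemma piKronecker_mono {M N : ι → Matrix d d ℂ} (hM : ∀ i, 0 ≤ M i) (hMN : ∀ i, M i ≤ N i) :
    piKronecker M ≤ piKronecker N := by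
  have hN i : 0 ≤ N i := (hM i).trans (hMN i)
  suffices ∀ s : Finset ι, piKronecker M ≤ piKronecker (s.piecewise N M) by
    simpa using this Finset.univ
  intro s
  induction s using Finset.induction_on with
  | empty => simp
  | insert j s hj ih =>
    refine ih.trans (sub_nonneg.1 ?_)
    rw [Finset.piecewise_insert, ← Function.update_eq_self j (s.piecewise N M),
      Function.update_idem, Finset.piecewise_eq_of_notMem _ _ _ hj, ← piKronecker_update_sub]
    refine piKronecker_nonneg fun i => ?_
    rcases eq_or_ne i j with rfl | hij
    · simpa using sub_nonneg.2 (hMN i)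
    · by_cases hi : i ∈ s <;> simp [hij, hi, hM, hN]

end piKronecker

end Matrix

section kronPow

open Matrix

variable {d : Type*} {n : ℕ}

def vecKronPow (n : ℕ) (v : d → ℂ) : (Fin n → d) → ℂ :=
  fun r => ∏ i, v (r i)

lemma vecKronPow_ne_zero {v : d → ℂ} (hv : v ≠ 0) : vecKronPow n v ≠ 0 := by
  obtain ⟨j, hj⟩ := Function.ne_iff.1 hv
  exact Function.ne_iff.2 ⟨fun _ => j, by simpa [vecKronPow] using pow_ne_zero n hj⟩

variable [Fintype d]

lemma kronPow_eq_piKronecker (M : Matrix d d ℂ) : kronPow n M = piKronecker fun _ => M :=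
  rfl

lemma kronPow_smul {S : Type*} [CommSemiring S] [Algebra S ℂ] (c : S) (M : Matrix d d ℂ) :
    kronPow n (c • M) = c ^ n • kronPow n M := by
  ext r s
  simp [kronPow, Algebra.smul_def, Finset.prod_mul_distrib]

lemma kronPow_mulVec_vecKronPow_of_mulVec_eq_smul {M : Matrix d d ℂ} {v : d → ℂ} {μ : ℂ}
    (h : M *ᵥ v = μ • v) : kronPow n M *ᵥ vecKronPow n v = μ ^ n • vecKronPow n v := by
  change kronPow n M *ᵥ (fun r => ∏ i, v (r i)) = μ ^ n • fun r => ∏ i, v (r i)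
  rw [kronPow_eq_piKronecker, piKronecker_mulVec (v := fun _ => v), h]
  ext r
  simp [Finset.prod_mul_distrib]

lemma IsStarProjection.kronPow {B : Matrix d d ℂ} (hB : IsStarProjection B) :
    IsStarProjection (kronPow n B) :=
  isStarProjection_piKronecker fun _ => hB

open scoped MatrixOrder Matrix.Norms.L2Operator

lemma kronPow_mono [DecidableEq d] {X Y : Matrix d d ℂ} (hX : 0 ≤ X) (hXY : X ≤ Y) :
    kronPow n X ≤ kronPow n Y :=
  piKronecker_mono (fun _ => hX) (fun _ => hXY)

end kronPow

theorem stmt14_general {d : Type*} [Fintype d] [DecidableEq d] [Nonempty d]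
    (n : ℕ) (A B : Matrix d d ℂ)
    (hA : A.PosSemidef) (hBH : B.IsHermitian) (hBA : (B - A).PosSemidef)
    (hB : B * B = B) :
    specNorm (kronPow n B - kronPow n (B - A)) = 1 - (1 - specNorm A) ^ n := by
  open scoped MatrixOrder Matrix.Norms.L2Operator in
  rw [specNorm_eq_norm, specNorm_eq_norm]
  have hB' : IsStarProjection B := ⟨hB, hBH⟩
  have hA0 : 0 ≤ A := hA.nonneg
  have hAB : A ≤ B := Matrix.le_iff.2 hBA
  rcases eq_or_ne ‖A‖ 0 with ha | ha
  · simp [norm_eq_zero.1 ha]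
  have ha1 : ‖A‖ ≤ 1 := (CStarAlgebra.norm_le_norm_of_nonneg_of_le hA0 hAB).trans hB'.norm_le
  have hsmul : (1 - ‖A‖) • B ≤ B - A := by
    rw [sub_smul, one_smul]
    exact sub_le_sub_left (hB'.le_norm_smul_of_nonneg_of_le hA0 hAB) B
  have hR : (1 - ‖A‖) ^ n • kronPow n B ≤ kronPow n (B - A) := by
    rw [← kronPow_smul]
    exact kronPow_mono (smul_nonneg (sub_nonneg.2 ha1) hB'.nonneg) hsmul
  refine CStarAlgebra.norm_eq_of_mem_spectrum_of_le_algebraMap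
    (sub_nonneg.2 (kronPow_mono hBA.nonneg (sub_le_self B hA0))) ?_
    (hB'.kronPow.sub_le_algebraMap_of_smul_le (pow_le_one₀ (sub_nonneg.2 ha1)
      (sub_le_self _ (norm_nonneg A))) hR)
  obtain ⟨v, hv0, hAv, hBv⟩ := hB'.exists_mulVec_eq_norm_smul_of_nonneg_of_le hA0 hAB ha
  have hBv' : B *ᵥ v = (1 : ℂ) • v := by rw [one_smul, hBv]
  have hCv : (B - A) *ᵥ v = ((1 - ‖A‖ : ℝ) : ℂ) • v := by
    rw [Matrix.sub_mulVec, hBv, hAv]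
    push_cast
    module
  refine Matrix.real_mem_spectrum_iff_exists_mulVec_eq_smul.2
    ⟨vecKronPow n v, vecKronPow_ne_zero hv0, ?_⟩
  rw [Matrix.sub_mulVec, kronPow_mulVec_vecKronPow_of_mulVec_eq_smul hBv',
    kronPow_mulVec_vecKronPow_of_mulVec_eq_smul hCv]
  push_cast
  module

/-- If `A`, `B` are Hermitian with `0 ≤ A ≤ B` and `B` an orthogonal
projection, then `‖B^{⊗n} − (B − A)^{⊗n}‖ = 1 − (1 − ‖A‖)^n` in spectral norm: the optimal
probability of winning at least one of `n` parallel repetitions in the verification model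
with abstention equals the independent-play value `1 − (1 − ‖A‖)^n`. -/
theorem stmt14 {d : Type*} [Fintype d] [DecidableEq d] [Nonempty d]
    (n : ℕ) (hn : 1 ≤ n) (A B : Matrix d d ℂ)
    (hA : A.PosSemidef) (hBH : B.IsHermitian) (hBA : (B - A).PosSemidef)
    (hB : B * B = B) :
    specNorm (kronPow n B - kronPow n (B - A)) = 1 - (1 - specNorm A) ^ n :=
  stmt14_general n A B hA hBH hBA hB
end
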